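/- arXiv:1207.5115 — 2 statements merged into one kernel-verified Lean document; each statement's English description precedes it below -/
import Mathlib

section
/- Let f_1, ..., f_k be polynomials in n variables over a field of characteristic zero. If there exists a nonzero polynomial A in k variables with A(f_1,...,f_k) = 0, then the Jacobian matrix (∂f_i/∂x_j), of size k × n, has rank strictly less than k over the field of rational functions. -/
/-!
For every annihilator `B` of `f`, the chain rule gives
`∑ i, (∂B/∂tᵢ)(f) · ∂fᵢ/∂xⱼ = ∂(B(f))/∂xⱼ = 0` for all `j`, so the vector `((∂B/∂tᵢ)(f))ᵢ`
lies in the left kernel of the Jacobian matrix. It is nonzero for an annihilator of minimal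
total degree: such a `B` is not constant, so in characteristic zero some `∂B/∂tᵢ` is a nonzero
polynomial of smaller degree, which therefore does not annihilate `f`.
-/

open MvPolynomial Matrix

theorem Matrix.rank_lt_card_height_of_vecMul_eq_zero {K m n : Type*} [Field K] [Fintype m]
    [Fintype n] (A : Matrix m n K) {v : m → K} (hv : v ≠ 0) (hvA : v ᵥ* A = 0) :
    A.rank < Fintype.card m := by
  refine A.rank_le_card_height.lt_of_ne fun h ↦ hv ?_
  have hli : LinearIndependent K A.row := by
    rw [linearIndependent_iff_card_eq_finrank_span, ← h, rank_eq_finrank_span_row]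
    rfl
  exact funext (Fintype.linearIndependent_iff.1 hli v (by rwa [vecMul_eq_sum] at hvA))

theorem Derivation.map_mvPolynomial_aeval {R S M ι : Type*} [CommSemiring R] [CommSemiring S]
    [Algebra R S] [AddCommMonoid M] [Module R M] [Module S M] [IsScalarTower R S M] [Fintype ι]
    (D : Derivation R S M) (f : ι → S) (p : MvPolynomial ι R) :
    D (aeval f p) = ∑ i, aeval f (pderiv i p) • D (f i) := by
  classical
  induction p using MvPolynomial.induction_on with
  | C a => simp
  | add p q hp hq => simp only [map_add, hp, hq, add_smul, Finset.sum_add_distrib]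
  | mul_X p i₀ hp =>
    simp only [map_mul, aeval_X, Derivation.leibniz, hp, Finset.smul_sum]
    simp [add_smul, Finset.sum_add_distrib, Pi.single_apply, apply_ite (aeval f), ite_smul,
      mul_smul, smul_comm (f i₀)]

theorem MvPolynomial.totalDegree_pderiv_lt {R σ : Type*} [CommSemiring R] {i : σ}
    {p : MvPolynomial σ R} (hp : pderiv i p ≠ 0) :
    (pderiv i p).totalDegree < p.totalDegree := by
  classical
  have hdeg : ∀ m ∈ (pderiv i p).support, (m.sum fun _ e ↦ e) < p.totalDegree := by
    intro m hm
    rw [mem_support_iff, coeff_pderiv] at hm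
    have := le_totalDegree (mem_support_iff.2 (left_ne_zero_of_mul hm))
    rw [Finsupp.sum_add_index' (fun _ ↦ rfl) (fun _ _ _ ↦ rfl), Finsupp.sum_single_index rfl]
      at this
    omega
  obtain ⟨m, hm⟩ := support_nonempty.2 hp
  exact (Finset.sup_lt_iff ((Nat.zero_le _).trans_lt (hdeg m hm))).2 hdeg

theorem MvPolynomial.eq_C_of_forall_pderiv_eq_zero {R σ : Type*} [CommSemiring R]
    [IsAddTorsionFree R] {p : MvPolynomial σ R} (hp : ∀ i, pderiv i p = 0) :
    p = C (p.coeff 0) := by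
  classical
  ext m
  rw [coeff_C]
  split_ifs with hm
  · rw [hm]
  obtain ⟨x, hx⟩ : ∃ x, m x ≠ 0 := by simpa [Finsupp.ext_iff] using Ne.symm hm
  obtain ⟨m, rfl⟩ : ∃ m', m = m' + Finsupp.single x 1 :=
    ⟨m - Finsupp.single x 1, (tsub_add_cancel_of_le (by simpa [Nat.one_le_iff_ne_zero])).symm⟩
  have h := coeff_pderiv (i := x) p m
  rw [hp, coeff_zero, ← Nat.cast_succ, mul_comm, ← nsmul_eq_mul] at h
  exact (nsmul_eq_zero_iff_right (m x).succ_ne_zero).1 h.symm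

theorem MvPolynomial.exists_aeval_eq_zero_and_aeval_pderiv_ne_zero {R S ι : Type*}
    [CommSemiring R] [IsAddTorsionFree R] [CommSemiring S] [Algebra R S] [FaithfulSMul R S]
    {f : ι → S} {A : MvPolynomial ι R} (hA : A ≠ 0) (hAf : aeval f A = 0) :
    ∃ B : MvPolynomial ι R, aeval f B = 0 ∧ ∃ i, aeval f (pderiv i B) ≠ 0 := by
  induction hd : A.totalDegree using Nat.strong_induction_on generalizing A with
  | _ d ih =>
  by_cases hB : ∃ i, aeval f (pderiv i A) ≠ 0
  · exact ⟨A, hAf, hB⟩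
  push Not at hB
  by_cases hA' : ∃ i, pderiv i A ≠ 0
  · obtain ⟨i, hi⟩ := hA'
    exact ih _ (hd ▸ totalDegree_pderiv_lt hi) hi (hB i) rfl
  push Not at hA'
  have hAC := eq_C_of_forall_pderiv_eq_zero hA'
  rw [hAC, aeval_C, map_eq_zero_iff _ (FaithfulSMul.algebraMap_injective R S)] at hAf
  exact (hA (by rw [hAC, hAf, map_zero])).elim

/-- If polynomials `f_1, …, f_k` over a characteristic-zero field are algebraically
dependent (there is a nonzero annihilating polynomial `A` with `A(f_1,…,f_k) = 0`),
then their Jacobian matrix has rank strictly less than `k` over the field of rational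
functions. -/
theorem stmt8 {F : Type*} [Field F] [CharZero F] {k n : ℕ}
    (f : Fin k → MvPolynomial (Fin n) F)
    (A : MvPolynomial (Fin k) F) (hA : A ≠ 0)
    (hann : MvPolynomial.aeval f A = 0) :
    (Matrix.of fun (i : Fin k) (j : Fin n) =>
        algebraMap (MvPolynomial (Fin n) F) (FractionRing (MvPolynomial (Fin n) F))
          (MvPolynomial.pderiv j (f i))).rank < k := by
  obtain ⟨B, hBf, i₀, hi₀⟩ := exists_aeval_eq_zero_and_aeval_pderiv_ne_zero hA hann
  set φ := algebraMap (MvPolynomial (Fin n) F) (FractionRing (MvPolynomial (Fin n) F))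
  have hφ : Function.Injective φ := IsFractionRing.injective _ _
  have hv : (fun i ↦ φ (aeval f (pderiv i B))) ≠ 0 := fun h ↦
    hi₀ (hφ (by simpa using congrFun h i₀))
  have hvM :
      (fun i ↦ φ (aeval f (pderiv i B))) ᵥ* Matrix.of (fun i j ↦ φ (pderiv j (f i))) = 0 := by
    ext j
    calc ∑ i, φ (aeval f (pderiv i B)) * φ (pderiv j (f i))
        = φ (pderiv j (aeval f B)) := by
          rw [(pderiv j).map_mvPolynomial_aeval, map_sum]
          simp only [smul_eq_mul, map_mul]
      _ = 0 := by rw [hBf, map_zero, map_zero]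
  simpa using rank_lt_card_height_of_vecMul_eq_zero _ hv hvM
end

section
/- Let F = (I_2(f), I_2(g)) with covariance matrix C. Then the law of F is absolutely continuous with respect to Lebesgue measure on R² if and only if det C > 0. -/
/-!
If `det C = 0`, the equality case of Cauchy–Schwarz gives `s • A + t • B = 0` with
`(s, t) ≠ 0`, so `s F₁ + t F₂ = 0` and the law of `F` lives on a line.

If `det C > 0`, then `A` and `B` are linearly independent. Since they are symmetric, this forces
the gradients `2 A x` and `2 B x` of the two quadratic forms to be independent for some `x`, i.e.
some `2 × 2` minor `(A x)ᵢ (B x)ⱼ - (A x)ⱼ (B x)ᵢ` is a nonzero quadratic form. Its zero set is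
Lebesgue-null, because it meets every line in a direction `u` with nonzero minor in at most two
points (Tonelli along those lines). Off that set, replacing the coordinates `i, j` of `x` by `(F₁, F₂)(x)` is a local
diffeomorphism of `ℝⁿ`, so preimages of planar null sets are null. Finally the Gaussian law
of `G` is absolutely continuous with respect to Lebesgue measure.
-/

open MeasureTheory ProbabilityTheory Set Matrix
open scoped ENNReal RealInnerProductSpace

theorem MeasureTheory.measure_eq_zero_of_forall_line_null {E : Type*} [NormedAddCommGroup E]
    [NormedSpace ℝ E] [MeasurableSpace E] [BorelSpace E] (μ : Measure E)
    [μ.IsAddLeftInvariant] [SFinite μ] {s : Set E} (hs : MeasurableSet s) (v : E)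
    (h : ∀ x, volume {t : ℝ | x + t • v ∈ s} = 0) : μ s = 0 := by
  have hmeas : Measurable fun p : ℝ × E => s.indicator (1 : E → ℝ≥0∞) (p.1 • v + p.2) :=
    (measurable_one.indicator hs).comp
      ((continuous_fst.smul continuous_const).add continuous_snd).measurable
  have hline (x : E) : ∫⁻ t in Icc (0 : ℝ) 1, s.indicator 1 (t • v + x) = 0 := by
    have hae : ∀ᵐ t : ℝ, x + t • v ∉ s := measure_eq_zero_iff_ae_notMem.1 (h x)
    refine (lintegral_congr_ae (ae_restrict_of_ae ?_)).trans lintegral_zero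
    filter_upwards [hae] with t ht
    simp [add_comm, ht]
  calc μ s = ∫⁻ t in Icc (0 : ℝ) 1, ∫⁻ x, s.indicator 1 (t • v + x) ∂μ := by
        simp_rw [lintegral_add_left_eq_self (μ := μ) (s.indicator (1 : E → ℝ≥0∞)),
          lintegral_indicator_one hs]
        simp
    _ = ∫⁻ x, (∫⁻ t in Icc (0 : ℝ) 1, s.indicator 1 (t • v + x)) ∂μ :=
        lintegral_lintegral_swap hmeas.aemeasurable
    _ = 0 := by simp [hline]

theorem QuadraticMap.continuous_of_finiteDimensional {E : Type*} [NormedAddCommGroup E]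
    [NormedSpace ℝ E] [FiniteDimensional ℝ E] (Q : QuadraticForm ℝ E) : Continuous Q := by
  have hQ : ⇑Q = fun x => (associated Q).toContinuousBilinearMap x x :=
    funext fun x => (associated_eq_self_apply ℝ Q x).symm
  rw [hQ]
  fun_prop

theorem QuadraticMap.measure_setOf_eq_zero {E : Type*} [NormedAddCommGroup E]
    [NormedSpace ℝ E] [FiniteDimensional ℝ E] [MeasurableSpace E] [BorelSpace E]
    (μ : Measure E) [μ.IsAddLeftInvariant] [SFinite μ]
    {Q : QuadraticForm ℝ E} (hQ : Q ≠ 0) : μ {x | Q x = 0} = 0 := by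
  obtain ⟨u, hu⟩ := DFunLike.ne_iff.1 hQ
  refine measure_eq_zero_of_forall_line_null μ
    (measurableSet_eq_fun Q.continuous_of_finiteDimensional.measurable measurable_const) u
    fun x => ?_
  open Polynomial in
  let p : ℝ[X] := C (Q u) * X ^ 2 + C (polar Q x u) * X + C (Q x)
  have hp : p ≠ 0 := fun h => hu (by simpa [p] using congrArg (coeff · 2) h)
  refine measure_mono_null (fun t ht => ?_)
    ((p.finite_setOfPred_isRoot hp).measure_zero _)
  simp only [mem_ofPred_eq, QuadraticMap.map_add, QuadraticMap.map_smul, polar_smul_right] at ht ⊢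
  simp [p]
  linear_combination ht

namespace MeasureTheory

theorem addHaar_preimage_inter_eq_zero_of_hasStrictFDerivAt {E : Type*}
    [NormedAddCommGroup E] [NormedSpace ℝ E] [FiniteDimensional ℝ E] [MeasurableSpace E]
    [BorelSpace E] (μ : Measure E) [μ.IsAddHaarMeasure] {f : E → E} {f' : E → E →L[ℝ] E}
    {s t : Set E} (hf : ∀ x ∈ s, HasStrictFDerivAt f (f' x) x)
    (hf' : ∀ x ∈ s, Function.Injective (f' x)) (ht : μ t = 0) : μ (f ⁻¹' t ∩ s) = 0 := by
  let e : s → E ≃L[ℝ] E := fun x =>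
    (LinearEquiv.ofInjectiveEndo (f' x : E →ₗ[ℝ] E) (hf' x x.2)).toContinuousLinearEquiv
  have he (x : s) : HasStrictFDerivAt f (e x : E →L[ℝ] E) x := hf x x.2
  let φ : s → OpenPartialHomeomorph E E := fun x => (he x).toOpenPartialHomeomorph f
  obtain ⟨T, hTc, hT⟩ := TopologicalSpace.isOpen_iUnion_countable (fun x => (φ x).source)
    fun x => (φ x).open_source
  have hcover : f ⁻¹' t ∩ s ⊆ ⋃ x ∈ T, (φ x).symm '' (t ∩ f '' (s ∩ (φ x).source)) := by
    rintro y ⟨hyt, hys⟩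
    have : y ∈ ⋃ x ∈ T, (φ x).source := hT ▸ mem_iUnion.2 ⟨⟨y, hys⟩,
      (he ⟨y, hys⟩).mem_toOpenPartialHomeomorph_source⟩
    obtain ⟨x, hxT, hyx⟩ := mem_iUnion₂.1 this
    exact mem_iUnion₂.2 ⟨x, hxT, f y, ⟨hyt, y, ⟨hys, hyx⟩, rfl⟩, (φ x).left_inv hyx⟩
  refine measure_mono_null hcover ((measure_biUnion_null_iff hTc).2 fun x _ => ?_)
  refine addHaar_image_eq_zero_of_differentiableOn_of_addHaar_eq_zero μ ?_
    (measure_mono_null inter_subset_left ht)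
  rintro _ ⟨-, y, ⟨hys, hyx⟩, rfl⟩
  have hinv := (φ x).hasFDerivAt_symm (f' := e ⟨y, hys⟩) ((φ x).map_source hyx)
    (by rw [(φ x).left_inv hyx]; exact (he ⟨y, hys⟩).hasFDerivAt)
  exact hinv.differentiableAt.differentiableWithinAt

theorem Measure.quasiMeasurePreserving_eval_pair {ι : Type*} [Fintype ι] [DecidableEq ι]
    {α : ι → Type*} [∀ k, MeasurableSpace (α k)] (μ : ∀ k, Measure (α k))
    [∀ k, SigmaFinite (μ k)] {i j : ι} (hij : i ≠ j) :
    QuasiMeasurePreserving (fun z : ∀ k, α k => (z i, z j)) (Measure.pi μ)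
      ((μ i).prod (μ j)) :=
  (QuasiMeasurePreserving.prodMap
    (quasiMeasurePreserving_eval (fun k : {k // k ≠ j} => μ k) ⟨i, hij⟩)
    (quasiMeasurePreserving_eval (fun k : {k // ¬k ≠ j} => μ k) ⟨j, not_not.2 rfl⟩)).comp
    (measurePreserving_piEquivPiSubtypeProd μ (· ≠ j)).quasiMeasurePreserving

theorem Measure.AbsolutelyContinuous.pi_fin : ∀ {n : ℕ} {α : Fin n → Type*}
    [∀ k, MeasurableSpace (α k)] {μ ν : ∀ k, Measure (α k)} [∀ k, SigmaFinite (μ k)]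
    [∀ k, SigmaFinite (ν k)], (∀ k, μ k ≪ ν k) → Measure.pi μ ≪ Measure.pi ν
  | 0, _, _, _, _, _, _, _ => by rw [Measure.pi_of_empty, Measure.pi_of_empty]
  | n + 1, α, _, μ, ν, _, _, h => by
    rw [← (measurePreserving_piFinSuccAbove μ 0).symm.map_eq,
      ← (measurePreserving_piFinSuccAbove ν 0).symm.map_eq]
    exact ((h 0).prod (pi_fin fun k => h _)).map (MeasurableEquiv.measurable _)

theorem Measure.AbsolutelyContinuous.pi {ι : Type*} [Fintype ι] {α : ι → Type*}
    [∀ k, MeasurableSpace (α k)] {μ ν : ∀ k, Measure (α k)} [∀ k, SigmaFinite (μ k)]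
    [∀ k, SigmaFinite (ν k)] (h : ∀ k, μ k ≪ ν k) : Measure.pi μ ≪ Measure.pi ν := by
  let e := (Fintype.equivFin ι).symm
  rw [← (measurePreserving_piCongrLeft μ e).map_eq, ← (measurePreserving_piCongrLeft ν e).map_eq]
  exact (pi_fin fun k => h (e k)).map (MeasurableEquiv.measurable _)

theorem not_absolutelyContinuous_map_of_forall_mem_submodule {Ω E : Type*}
    [MeasurableSpace Ω] [NormedAddCommGroup E] [NormedSpace ℝ E] [FiniteDimensional ℝ E]
    [MeasurableSpace E] [BorelSpace E] {μ : Measure Ω} [NeZero μ] {X : Ω → E}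
    (hX : AEMeasurable X μ) {V : Submodule ℝ E} (hV : V ≠ ⊤) (hXV : ∀ ω, X ω ∈ V)
    (ν : Measure E) [ν.IsAddHaarMeasure] : ¬μ.map X ≪ ν := by
  intro hac
  have hnull := hac (Measure.addHaar_submodule ν V hV)
  rw [Measure.map_apply_of_aemeasurable hX V.closed_of_finiteDimensional.measurableSet,
    show X ⁻¹' V = univ from eq_univ_of_forall hXV, Measure.measure_univ_eq_zero] at hnull
  exact NeZero.ne μ hnull

end MeasureTheory

theorem injective_pi_ite_of_mul_ne_mul {ι : Type*} [Fintype ι] [DecidableEq ι]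
    {f' g' : (ι → ℝ) →L[ℝ] ℝ} {i j : ι} (hij : i ≠ j)
    (hfg : f' (Pi.single i 1) * g' (Pi.single j 1) ≠ f' (Pi.single j 1) * g' (Pi.single i 1)) :
    Function.Injective (ContinuousLinearMap.pi fun k =>
      if k = i then f' else if k = j then g' else ContinuousLinearMap.proj k) := by
  rw [injective_iff_map_eq_zero]
  intro v hv
  have hcoord (k : ι) := congrFun hv k
  have hv_eq : v = v i • Pi.single i 1 + v j • Pi.single j 1 := by
    ext k
    by_cases hki : k = i
    · subst hki; simp [hij]
    by_cases hkj : k = j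
    · subst hkj; simp [hki]
    simpa [hki, hkj, Pi.single_apply] using hcoord k
  have hf : v i * f' (Pi.single i 1) + v j * f' (Pi.single j 1) = 0 := by
    have h := hcoord i
    simp only [ContinuousLinearMap.pi_apply, if_pos, Pi.zero_apply] at h
    rwa [hv_eq, map_add, map_smul, map_smul, smul_eq_mul, smul_eq_mul] at h
  have hg : v i * g' (Pi.single i 1) + v j * g' (Pi.single j 1) = 0 := by
    have h := hcoord j
    simp only [ContinuousLinearMap.pi_apply, if_neg hij.symm, if_pos, Pi.zero_apply] at h
    rwa [hv_eq, map_add, map_smul, map_smul, smul_eq_mul, smul_eq_mul] at h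
  have hvi : v i = 0 := by
    refine (mul_eq_zero.1 ?_).resolve_right (sub_ne_zero.2 hfg)
    linear_combination g' (Pi.single j 1) * hf - f' (Pi.single j 1) * hg
  have hvj : v j = 0 := by
    refine (mul_eq_zero.1 ?_).resolve_right (sub_ne_zero.2 hfg)
    linear_combination f' (Pi.single i 1) * hg - g' (Pi.single i 1) * hf
  rw [hv_eq, hvi, hvj]
  simp

theorem volume_preimage_inter_eq_zero_of_hasStrictFDerivAt_pair {ι : Type*} [Fintype ι]
    [DecidableEq ι] {f g : (ι → ℝ) → ℝ} {f' g' : (ι → ℝ) → (ι → ℝ) →L[ℝ] ℝ}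
    (hf : ∀ x, HasStrictFDerivAt f (f' x) x) (hg : ∀ x, HasStrictFDerivAt g (g' x) x)
    {i j : ι} (hij : i ≠ j) {S : Set (ℝ × ℝ)} (hS : volume S = 0) :
    volume ((fun x => (f x, g x)) ⁻¹' S ∩
      {x | f' x (Pi.single i 1) * g' x (Pi.single j 1) ≠
        f' x (Pi.single j 1) * g' x (Pi.single i 1)}) = 0 := by
  -- `Ψ` is a local diffeomorphism on the set in question, and maps it into a cylinder over `S`.
  let Ψ : (ι → ℝ) → ι → ℝ := fun x k => if k = i then f x else if k = j then g x else x k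
  have hΨ (x : ι → ℝ) : HasStrictFDerivAt Ψ (ContinuousLinearMap.pi fun k =>
      if k = i then f' x else if k = j then g' x else ContinuousLinearMap.proj k) x := by
    refine hasStrictFDerivAt_pi.2 fun k => ?_
    split_ifs
    exacts [hf x, hg x, hasStrictFDerivAt_apply k x]
  have hcyl : volume {z : ι → ℝ | (z i, z j) ∈ S} = 0 :=
    (Measure.quasiMeasurePreserving_eval_pair (fun _ => volume) hij).preimage_null hS
  refine measure_mono_null ?_
    (addHaar_preimage_inter_eq_zero_of_hasStrictFDerivAt volume (fun x _ => hΨ x)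
      (fun x hx => injective_pi_ite_of_mul_ne_mul hij hx) hcyl)
  rintro x ⟨hxS, hx⟩
  exact ⟨by simpa [Ψ, hij.symm] using hxS, hx⟩

theorem linearIndependent_pair_iff_inner_sq_lt {F : Type*} [NormedAddCommGroup F]
    [InnerProductSpace ℝ F] (x y : F) :
    LinearIndependent ℝ ![x, y] ↔ ⟪x, y⟫ ^ 2 < ‖x‖ ^ 2 * ‖y‖ ^ 2 := by
  rcases eq_or_ne x 0 with rfl | hx
  · simpa using fun h => h.ne_zero 0 rfl
  have hcs : |⟪x, y⟫| = ‖x‖ * ‖y‖ ↔ x = 0 ∨ ∃ r : ℝ, y = r • x :=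
    (norm_inner_eq_norm_tfae ℝ x y).out 0 2
  rw [LinearIndependent.pair_iff' hx, ← mul_pow, ← sq_abs,
    sq_lt_sq₀ (abs_nonneg _) (by positivity), (abs_real_inner_le_norm x y).lt_iff_ne, Ne, hcs]
  simp [hx, eq_comm]

theorem Matrix.linearIndependent_pair_iff_frobenius_sq_lt {m n : Type*} [Fintype m] [Fintype n]
    (A B : Matrix m n ℝ) :
    LinearIndependent ℝ ![A, B] ↔ (∑ i, ∑ j, A i j * B i j) ^ 2 <
      (∑ i, ∑ j, A i j * A i j) * (∑ i, ∑ j, B i j * B i j) := by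
  let e : Matrix m n ℝ →ₗ[ℝ] EuclideanSpace ℝ (m × n) :=
    { toFun := fun A => WithLp.toLp 2 fun p => A p.1 p.2
      map_add' := fun _ _ => rfl
      map_smul' := fun _ _ => rfl }
  have he : LinearMap.ker e = ⊥ := LinearMap.ker_eq_bot'.2 fun A hA => by
    ext i j
    exact congrArg (· (i, j)) hA
  have hinner (A B : Matrix m n ℝ) : ⟪e A, e B⟫ = ∑ i, ∑ j, A i j * B i j := by
    simp only [PiLp.inner_apply, Fintype.sum_prod_type, RCLike.inner_apply, conj_trivial]
    exact Finset.sum_congr rfl fun i _ => Finset.sum_congr rfl fun j _ => mul_comm _ _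
  have hcomp : ⇑e ∘ ![A, B] = ![e A, e B] := by
    ext k : 1
    fin_cases k <;> rfl
  rw [← e.linearIndependent_iff he, hcomp, linearIndependent_pair_iff_inner_sq_lt,
    ← real_inner_self_eq_norm_sq, ← real_inner_self_eq_norm_sq, hinner, hinner, hinner]

section

variable {ι : Type*} [Fintype ι] {A B : Matrix ι ι ℝ}

theorem Matrix.dotProduct_mulVec_self_eq_sum (A : Matrix ι ι ℝ) (x : ι → ℝ) :
    x ⬝ᵥ A *ᵥ x = ∑ i, ∑ j, A i j * x i * x j := by
  simp only [dotProduct, mulVec, Finset.mul_sum]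
  exact Finset.sum_congr rfl fun i _ => Finset.sum_congr rfl fun j _ => by ring

theorem Matrix.IsSymm.dotProduct_mulVec_eq (hA : A.IsSymm) (x y : ι → ℝ) :
    x ⬝ᵥ A *ᵥ y = A *ᵥ x ⬝ᵥ y := by
  rw [dotProduct_mulVec, ← mulVec_transpose, hA.eq]

theorem Matrix.IsSymm.dotProduct_mulVec_comm (hA : A.IsSymm) (x y : ι → ℝ) :
    x ⬝ᵥ A *ᵥ y = y ⬝ᵥ A *ᵥ x := by
  rw [hA.dotProduct_mulVec_eq, dotProduct_comm]

theorem Matrix.IsSymm.dotProduct_mulVec_add_smul (hA : A.IsSymm) (x u : ι → ℝ) (t : ℝ) :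
    (x + t • u) ⬝ᵥ A *ᵥ (x + t • u) =
      x ⬝ᵥ A *ᵥ x + 2 * t * (u ⬝ᵥ A *ᵥ x) + t ^ 2 * (u ⬝ᵥ A *ᵥ u) := by
  simp only [mulVec_add, mulVec_smul, dotProduct_add, add_dotProduct, dotProduct_smul,
    smul_dotProduct, smul_eq_mul, hA.dotProduct_mulVec_comm x u]
  ring

theorem Matrix.IsSymm.eq_zero_of_forall_dotProduct_mulVec_self [DecidableEq ι] (hA : A.IsSymm)
    (h : ∀ x, x ⬝ᵥ A *ᵥ x = 0) : A = 0 := by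
  ext i j
  have := hA.dotProduct_mulVec_add_smul (Pi.single j 1) (Pi.single i 1) 1
  rw [h, h, h] at this
  simpa using this

theorem Matrix.IsSymm.hasStrictFDerivAt_dotProduct_mulVec_self [DecidableEq ι] (hA : A.IsSymm)
    (x : ι → ℝ) :
    HasStrictFDerivAt (fun y => y ⬝ᵥ A *ᵥ y)
      ((2 : ℝ) • LinearMap.toContinuousLinearMap (dotProductBilin ℝ ℝ (A *ᵥ x))) x := by
  have := (toLinearMap₂' ℝ A).toContinuousBilinearMap.hasStrictFDerivAt_of_bilinear
    (hasStrictFDerivAt_id x) (hasStrictFDerivAt_id x)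
  simp only [LinearMap.toContinuousBilinearMap_apply, toLinearMap₂'_apply', id] at this
  refine this.congr_fderiv ?_
  ext v
  simp [toLinearMap₂'_apply', hA.dotProduct_mulVec_comm v x, hA.dotProduct_mulVec_eq x v]
  ring

def Matrix.mulVecMinor (A B : Matrix ι ι ℝ) (i j : ι) : QuadraticForm ℝ (ι → ℝ) :=
  QuadraticMap.linMulLin (LinearMap.proj i ∘ₗ A.mulVecLin) (LinearMap.proj j ∘ₗ B.mulVecLin) -
    QuadraticMap.linMulLin (LinearMap.proj j ∘ₗ A.mulVecLin) (LinearMap.proj i ∘ₗ B.mulVecLin)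

@[simp]
theorem Matrix.mulVecMinor_apply (i j : ι) (x : ι → ℝ) :
    A.mulVecMinor B i j x = (A *ᵥ x) i * (B *ᵥ x) j - (A *ᵥ x) j * (B *ᵥ x) i :=
  rfl

theorem Matrix.dotProduct_mulVec_mul_comm_of_mulVecMinor_eq_zero {x : ι → ℝ}
    (h : ∀ i j, A.mulVecMinor B i j x = 0) (u : ι → ℝ) :
    (x ⬝ᵥ A *ᵥ x) * (u ⬝ᵥ B *ᵥ x) = (x ⬝ᵥ B *ᵥ x) * (u ⬝ᵥ A *ᵥ x) := by
  simp only [mulVecMinor_apply] at h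
  simp only [dotProduct, Finset.sum_mul_sum]
  refine Finset.sum_congr rfl fun k _ => Finset.sum_congr rfl fun l _ => ?_
  linear_combination x k * u l * h k l

theorem Matrix.exists_mulVecMinor_ne_zero [DecidableEq ι] (hA : A.IsSymm) (hB : B.IsSymm)
    (hAB : LinearIndependent ℝ ![A, B]) : ∃ i j, A.mulVecMinor B i j ≠ 0 := by
  by_contra! h
  have hpar (x u : ι → ℝ) := dotProduct_mulVec_mul_comm_of_mulVecMinor_eq_zero
    (fun i j => by rw [h i j]; rfl) (x := x) u
  obtain ⟨u, hu⟩ : ∃ u, u ⬝ᵥ A *ᵥ u ≠ 0 := by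
    by_contra! h0
    exact hAB.ne_zero 0 (hA.eq_zero_of_forall_dotProduct_mulVec_self h0)
  set M := (u ⬝ᵥ B *ᵥ u) • A - (u ⬝ᵥ A *ᵥ u) • B
  have hM : M.IsSymm := (hA.smul _).sub (hB.smul _)
  have hQM (x : ι → ℝ) :
      x ⬝ᵥ M *ᵥ x = (u ⬝ᵥ B *ᵥ u) * (x ⬝ᵥ A *ᵥ x) - (u ⬝ᵥ A *ᵥ u) * (x ⬝ᵥ B *ᵥ x) := by
    simp [M, sub_mulVec, smul_mulVec, dotProduct_sub]
  have hvanish (x : ι → ℝ) (hx : u ⬝ᵥ A *ᵥ x ≠ 0) : x ⬝ᵥ M *ᵥ x = 0 := by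
    have h1 := hpar x u
    have h2 := hpar u x
    rw [hA.dotProduct_mulVec_comm x u, hB.dotProduct_mulVec_comm x u] at h2
    refine (mul_left_inj' hx).1 ?_
    rw [hQM]
    linear_combination (u ⬝ᵥ A *ᵥ u) * h1 - (x ⬝ᵥ A *ᵥ x) * h2
  -- On the hyperplane `u ⬝ A x = 0`, use `x ± u` (off the hyperplane) and the parallelogram law.
  have hQ (x : ι → ℝ) : x ⬝ᵥ M *ᵥ x = 0 := by
    by_cases hx : u ⬝ᵥ A *ᵥ x = 0
    · have hline (t : ℝ) : u ⬝ᵥ A *ᵥ (x + t • u) = t * (u ⬝ᵥ A *ᵥ u) := by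
        simp [mulVec_add, mulVec_smul, dotProduct_add, dotProduct_smul, hx]
      have hp := hvanish (x + (1 : ℝ) • u) (by rw [hline]; simpa using hu)
      have hm := hvanish (x + (-1 : ℝ) • u) (by rw [hline]; simpa using hu)
      rw [hM.dotProduct_mulVec_add_smul] at hp hm
      have hu0 : u ⬝ᵥ M *ᵥ u = 0 := by rw [hQM]; ring
      linear_combination (hp + hm) / 2 - hu0
    · exact hvanish x hx
  have hM0 : (u ⬝ᵥ B *ᵥ u) • A + (-(u ⬝ᵥ A *ᵥ u)) • B = 0 := by
    rw [neg_smul, ← sub_eq_add_neg]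
    exact hM.eq_zero_of_forall_dotProduct_mulVec_self hQ
  exact hu (neg_eq_zero.1 (LinearIndependent.pair_iff.1 hAB _ _ hM0).2)

/-- `I₂(A)` as a function of the sample `x` of the standard Gaussian vector. -/
def secondChaos (x : ι → ℝ) : Matrix ι ι ℝ →ₗ[ℝ] ℝ where
  toFun A := x ⬝ᵥ A *ᵥ x - A.trace
  map_add' A B := by simp only [add_mulVec, dotProduct_add, trace_add]; ring
  map_smul' c A := by
    simp only [smul_mulVec, dotProduct_smul, trace_smul, smul_eq_mul, RingHom.id_apply]
    ring

@[simp]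
theorem secondChaos_apply (x : ι → ℝ) (A : Matrix ι ι ℝ) :
    secondChaos x A = x ⬝ᵥ A *ᵥ x - A.trace :=
  rfl

theorem continuous_secondChaos (A : Matrix ι ι ℝ) : Continuous fun x => secondChaos x A := by
  simp only [secondChaos_apply]
  fun_prop

theorem quasiMeasurePreserving_secondChaos_pair [DecidableEq ι] (hA : A.IsSymm)
    (hB : B.IsSymm) (hAB : LinearIndependent ℝ ![A, B]) :
    Measure.QuasiMeasurePreserving (fun x : ι → ℝ => (secondChaos x A, secondChaos x B))
      volume volume := by
  obtain ⟨i, j, hij⟩ := exists_mulVecMinor_ne_zero hA hB hAB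
  have hne : i ≠ j := by
    rintro rfl
    exact hij (QuadraticMap.ext fun x => by simp)
  have hderiv {M : Matrix ι ι ℝ} (hM : M.IsSymm) (x : ι → ℝ) :
      HasStrictFDerivAt (fun y => secondChaos y M)
        ((2 : ℝ) • LinearMap.toContinuousLinearMap (dotProductBilin ℝ ℝ (M *ᵥ x))) x :=
    (hM.hasStrictFDerivAt_dotProduct_mulVec_self x).sub_const _
  have hmeas := ((continuous_secondChaos A).prodMk (continuous_secondChaos B)).measurable
  refine ⟨hmeas, Measure.AbsolutelyContinuous.mk fun S hS hS0 => ?_⟩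
  rw [Measure.map_apply hmeas hS]
  refine measure_mono_null (fun x hx => ?_) (measure_union_null
    (QuadraticMap.measure_setOf_eq_zero volume hij)
    (volume_preimage_inter_eq_zero_of_hasStrictFDerivAt_pair (hderiv hA) (hderiv hB) hne hS0))
  by_cases hx0 : A.mulVecMinor B i j x = 0
  · exact Or.inl hx0
  · refine Or.inr ⟨hx, fun h => hx0 ?_⟩
    simp only [_root_.smul_apply, LinearMap.coe_toContinuousLinearMap',
      dotProductBilin_apply_apply, dotProduct_single, mul_one, smul_eq_mul] at h
    rw [mulVecMinor_apply]
    linear_combination h / 4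

theorem absolutelyContinuous_map_secondChaos_pair [DecidableEq ι] {Ω : Type*}
    [MeasurableSpace Ω] {μ : Measure Ω} {X : Ω → ι → ℝ} (hX : Measurable X)
    (hXac : μ.map X ≪ volume) (hA : A.IsSymm) (hB : B.IsSymm)
    (hAB : LinearIndependent ℝ ![A, B]) :
    μ.map (fun ω => (secondChaos (X ω) A, secondChaos (X ω) B)) ≪ volume := by
  have hφ := ((continuous_secondChaos A).prodMk (continuous_secondChaos B)).measurable
  have hac := (hXac.map hφ).trans
    (quasiMeasurePreserving_secondChaos_pair hA hB hAB).absolutelyContinuous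
  rwa [Measure.map_map hφ hX] at hac

theorem not_absolutelyContinuous_map_secondChaos_pair {Ω : Type*} [MeasurableSpace Ω]
    {μ : Measure Ω} [NeZero μ] {X : Ω → ι → ℝ} (hX : AEMeasurable X μ)
    (hAB : ¬LinearIndependent ℝ ![A, B]) :
    ¬μ.map (fun ω => (secondChaos (X ω) A, secondChaos (X ω) B)) ≪ volume := by
  obtain ⟨s, t, hst, hst0⟩ : ∃ s t : ℝ, s • A + t • B = 0 ∧ ¬(s = 0 ∧ t = 0) := by
    simpa [LinearIndependent.pair_iff] using hAB
  let L : ℝ × ℝ →ₗ[ℝ] ℝ := s • LinearMap.fst ℝ ℝ ℝ + t • LinearMap.snd ℝ ℝ ℝ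
  have hL : LinearMap.ker L ≠ ⊤ := by
    rw [Ne, LinearMap.ker_eq_top]
    intro hL
    exact hst0 ⟨by simpa [L] using LinearMap.congr_fun hL (1, 0),
      by simpa [L] using LinearMap.congr_fun hL (0, 1)⟩
  refine not_absolutelyContinuous_map_of_forall_mem_submodule
    (((continuous_secondChaos A).prodMk (continuous_secondChaos B)).measurable.comp_aemeasurable
      hX) hL (fun ω => ?_) volume
  have h := congrArg (secondChaos (X ω)) hst
  rw [map_add, map_smul, map_smul, map_zero] at h
  simpa [L] using h

end

/-- For `F = (I₂(f), I₂(g))` with covariance matrix `C`, the law of `F` is absolutely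
continuous with respect to Lebesgue measure on `ℝ²` iff `det C > 0`. Here the second
Wiener chaos is realized concretely: `f, g ∈ H^{⊙2}` are symmetric matrices `A, B`
(`H = ℝ^n`), `G` is a standard Gaussian vector, `I₂(A) = ⟨G, A G⟩ − tr A`, and the
covariance matrix has entries `2⟨A,A⟩, 2⟨A,B⟩, 2⟨B,B⟩` (Hilbert–Schmidt inner
products). -/
theorem stmt14 {Ω : Type*} [MeasureSpace Ω] [IsProbabilityMeasure (ℙ : Measure Ω)]
    {n : ℕ} (G : Ω → (Fin n → ℝ)) (hGmeas : Measurable G)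
    (hGlaw : Measure.map G ℙ = Measure.pi fun _ => gaussianReal 0 1)
    (A B : Matrix (Fin n) (Fin n) ℝ) (hA : A.IsSymm) (hB : B.IsSymm)
    (F₁ F₂ : Ω → ℝ)
    (hF₁ : ∀ ω, F₁ ω = (∑ i, ∑ j, A i j * G ω i * G ω j) - A.trace)
    (hF₂ : ∀ ω, F₂ ω = (∑ i, ∑ j, B i j * G ω i * G ω j) - B.trace)
    (C : Matrix (Fin 2) (Fin 2) ℝ)
    (hC : C = !![2 * ∑ i, ∑ j, A i j * A i j, 2 * ∑ i, ∑ j, A i j * B i j;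
                 2 * ∑ i, ∑ j, A i j * B i j, 2 * ∑ i, ∑ j, B i j * B i j]) :
    (Measure.map (fun ω => (F₁ ω, F₂ ω)) ℙ ≪ (volume : Measure (ℝ × ℝ))) ↔ 0 < C.det := by
  have hF : (fun ω => (F₁ ω, F₂ ω)) = fun ω => (secondChaos (G ω) A, secondChaos (G ω) B) := by
    simp [hF₁, hF₂, dotProduct_mulVec_self_eq_sum]
  have hdet : 0 < C.det ↔ LinearIndependent ℝ ![A, B] := by
    rw [linearIndependent_pair_iff_frobenius_sq_lt, hC, det_fin_two_of]
    constructor <;> intro h <;> nlinarith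
  rw [hdet, hF]
  refine ⟨not_imp_not.1 (not_absolutelyContinuous_map_secondChaos_pair hGmeas.aemeasurable),
    fun hAB => absolutelyContinuous_map_secondChaos_pair hGmeas ?_ hA hB hAB⟩
  rw [hGlaw]
  exact Measure.AbsolutelyContinuous.pi fun _ => gaussianReal_absolutelyContinuous 0 one_ne_zero
end
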